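/- Define H : ℕ → ℤ by H(0)=1 and H(n) = det((c_{i+j})_{0≤i,j≤n−1}) for n ≥ 1, and H' : ℕ → ℤ by H'(0)=1 and H'(n) = det((d_{i+j})_{0≤i,j≤n−1}) for n ≥ 1. Then the 2-kernels { (H(2^d·n+j))_{n≥0} : d ∈ ℕ, 0 ≤ j < 2^d } and { (H'(2^d·n+j))_{n≥0} : d ∈ ℕ, 0 ≤ j < 2^d } are finite sets; in particular, the sequences of Hankel determinants (H(n)) and (H'(n)) are 2-automatic. -/

import Mathlib

open Polynomial

/-- The Thue–Morse ±1 sequence: t 0 = 1, t (2n) = t n, t (2n+1) = -t n. -/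
def tmSeq : ℕ → ℤ
  | 0 => 1
  | n + 1 => if (n + 1) % 2 = 0 then tmSeq ((n + 1) / 2) else -tmSeq ((n + 1) / 2)
decreasing_by all_goals exact Nat.div_lt_self (Nat.succ_pos n) one_lt_two

/-- Numerators of the convergents of the Thue–Morse continued fraction. -/
noncomputable def Ptm : ℕ → ℤ[X]
  | 0 => 1
  | 1 => 1
  | n + 2 => Ptm (n + 1) + C (tmSeq (n + 2)) * X * Ptm n

/-- Denominators of the convergents of the Thue–Morse continued fraction. -/
noncomputable def Qtm : ℕ → ℤ[X]
  | 0 => 1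
  | 1 => 1 - X
  | n + 2 => Qtm (n + 1) + C (tmSeq (n + 2)) * X * Qtm n

open Polynomial

/-- The period-doubling ±1 sequence: s (2n) = 1, s (2n+1) = -s n. -/
def pdSeq : ℕ → ℤ
  | 0 => 1
  | n + 1 => if (n + 1) % 2 = 0 then 1 else -pdSeq ((n + 1) / 2)
decreasing_by exact Nat.div_lt_self (Nat.succ_pos n) one_lt_two

/-- Numerators of the convergents of the period-doubling continued fraction. -/
noncomputable def Ppd : ℕ → ℤ[X]
  | 0 => 1
  | 1 => 1
  | n + 2 => Ppd (n + 1) + C (pdSeq (n + 2)) * X * Ppd n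

/-- Denominators of the convergents of the period-doubling continued fraction. -/
noncomputable def Qpd : ℕ → ℤ[X]
  | 0 => 1
  | 1 => 1 - X
  | n + 2 => Qpd (n + 1) + C (pdSeq (n + 2)) * X * Qpd n

/-!
If `F ≡ P n / Q n` to order `n + 1` for the convergents `P n / Q n`, multiply the Hankel matrix of
`F` on the left by the unitriangular matrix whose `k`-th row holds the coefficients of
`Q (2k-1)`. The `(k, j)` entry becomes the coefficient of `x ^ (j + k)` in `F * Q (2k-1)`, which
agrees with `P (2k-1)` (of degree `< k`) up to order `2k - 1`; so the product is upper triangular,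
and its diagonal entries are the leading error terms, computed from the determinant formula
`P (n+1) Q n - P n Q (n+1) = (-1)^n a₂ ⋯ a_{n+1} x^(n+1)`. This gives
`H m = ∏_{k<m} a₀ a₁ ⋯ a_{2k}` once `a₀ = 1`, `a₁ = -1`. Hence `H (2n) = 1`, `H (2n+1) = t n` and
`H' (2n) = (-1)^n`, `H' (2n+1) = s 0 ⋯ s (n-1)`. Each of these sequences `g` satisfies
`g (2n) = ε σ^n g n` and `g (2n+1) = ε' σ'^n g n` with signs `ε, σ, ε', σ'`, so its 2-kernel lies
in the finite family `n ↦ ± (±1)^n g n`.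
-/

open Finset
open scoped PowerSeries

section ContinuedFraction

variable {R : Type*} [CommRing R]

noncomputable def contNum (a : ℕ → R) : ℕ → R[X]
  | 0 => 1
  | 1 => 1
  | n + 2 => contNum a (n + 1) + C (a (n + 2)) * X * contNum a n

noncomputable def contDen (a : ℕ → R) : ℕ → R[X]
  | 0 => 1
  | 1 => 1 - X
  | n + 2 => contDen a (n + 1) + C (a (n + 2)) * X * contDen a n

variable {a : ℕ → R}

theorem eq_of_recurrence {u v : ℕ → R[X]} (h0 : u 0 = v 0) (h1 : u 1 = v 1)
    (hu : ∀ n, u (n + 2) = u (n + 1) + C (a (n + 2)) * X * u n)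
    (hv : ∀ n, v (n + 2) = v (n + 1) + C (a (n + 2)) * X * v n) : u = v := by
  funext n
  induction n using Nat.twoStepInduction with
  | zero => exact h0
  | one => exact h1
  | more n ihn ihn1 => rw [hu, hv, ihn, ihn1]

theorem natDegree_le_of_recurrence {u : ℕ → R[X]} {c : ℕ}
    (hu : ∀ n, u (n + 2) = u (n + 1) + C (a (n + 2)) * X * u n)
    (h0 : (u 0).natDegree ≤ c / 2) (h1 : (u 1).natDegree ≤ (c + 1) / 2) (n : ℕ) :
    (u n).natDegree ≤ (n + c) / 2 := by
  induction n using Nat.twoStepInduction with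
  | zero => simpa using h0
  | one => simpa [add_comm] using h1
  | more n ihn ihn1 =>
    rw [hu]
    refine natDegree_add_le_of_degree_le (ihn1.trans (by omega)) ?_
    calc (C (a (n + 2)) * X * u n).natDegree
        ≤ (C (a (n + 2)) * X).natDegree + (u n).natDegree := natDegree_mul_le
      _ ≤ 1 + (n + c) / 2 := add_le_add ((natDegree_C_mul_le _ _).trans natDegree_X_le) ihn
      _ ≤ (n + 2 + c) / 2 := by omega

theorem natDegree_contNum_le (n : ℕ) : (contNum a n).natDegree ≤ n / 2 :=
  natDegree_le_of_recurrence (c := 0) (fun _ => rfl) (by simp [contNum]) (by simp [contNum]) n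

theorem natDegree_contDen_le (n : ℕ) : (contDen a n).natDegree ≤ (n + 1) / 2 :=
  natDegree_le_of_recurrence (c := 1) (fun _ => rfl) (by simp [contDen])
    (by simp only [contDen]; exact (natDegree_sub_le _ _).trans (by simp [natDegree_X_le])) n

theorem coeff_contDen_zero (n : ℕ) : (contDen a n).coeff 0 = 1 := by
  induction n using Nat.twoStepInduction with
  | zero => simp [contDen]
  | one => simp [contDen]
  | more n _ ihn1 => simp [contDen, ihn1]

theorem contNum_succ_mul_contDen_sub (n : ℕ) :
    contNum a (n + 1) * contDen a n - contNum a n * contDen a (n + 1) =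
      C ((-1) ^ n * ∏ j ∈ Ico 2 (n + 2), a j) * X ^ (n + 1) := by
  induction n with
  | zero => simp [contNum, contDen]
  | succ n ih =>
    have step : contNum a (n + 2) * contDen a (n + 1) - contNum a (n + 1) * contDen a (n + 2) =
        -(C (a (n + 2)) * X) *
          (contNum a (n + 1) * contDen a n - contNum a n * contDen a (n + 1)) := by
      simp only [contNum, contDen]; ring
    rw [step, ih, prod_Ico_succ_top (by omega : 2 ≤ n + 2)]
    simp only [map_mul, map_pow, map_neg, map_one]
    ring

end ContinuedFraction

section ContFracExpansion

variable {R : Type*} [CommRing R]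

def IsContFracExpansion (a : ℕ → R) (F : R⟦X⟧) : Prop :=
  ∀ n, (PowerSeries.X : R⟦X⟧) ^ (n + 1) ∣ F * (contDen a n : R⟦X⟧) - (contNum a n : R⟦X⟧)

variable {a : ℕ → R} {F : R⟦X⟧}

namespace IsContFracExpansion

theorem coeff_sub_eq_zero (hF : IsContFracExpansion a F) {n k : ℕ} (hk : k ≤ n) :
    PowerSeries.coeff k (F * (contDen a n : R⟦X⟧) - (contNum a n : R⟦X⟧)) = 0 :=
  PowerSeries.X_pow_dvd_iff.mp (hF n) k (by omega)

theorem coeff_zero (hF : IsContFracExpansion a F) : PowerSeries.coeff 0 F = 1 := by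
  simpa [contNum, contDen, sub_eq_zero] using hF.coeff_sub_eq_zero (le_refl 0)

theorem coeff_succ_sub (hF : IsContFracExpansion a F) (n : ℕ) :
    PowerSeries.coeff (n + 1) (F * (contDen a n : R⟦X⟧) - (contNum a n : R⟦X⟧)) =
      (-1) ^ n * ∏ j ∈ Ico 2 (n + 2), a j := by
  obtain ⟨G, hG⟩ := hF n
  have hcross := contNum_succ_mul_contDen_sub (a := a) n
  generalize (-1) ^ n * ∏ j ∈ Ico 2 (n + 2), a j = c at hcross ⊢
  have hnext : PowerSeries.coeff (n + 1)
      ((F * (contDen a (n + 1) : R⟦X⟧) - (contNum a (n + 1) : R⟦X⟧)) * (contDen a n : R⟦X⟧)) = 0 :=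
    PowerSeries.X_pow_dvd_iff.mp (dvd_mul_of_dvd_left (hF (n + 1)) _) _ (by omega)
  -- `E (n+1) * Q n - E n * Q (n+1)`, with `E n = F * Q n - P n`, is minus the cross determinant,
  -- and `E (n+1)` vanishes to order `n + 2`.
  have key : (F * (contDen a (n + 1) : R⟦X⟧) - (contNum a (n + 1) : R⟦X⟧)) * (contDen a n : R⟦X⟧)
      - PowerSeries.X ^ (n + 1) * (G * (contDen a (n + 1) : R⟦X⟧)) =
        -(PowerSeries.C c * PowerSeries.X ^ (n + 1)) := by
    rw [← mul_assoc, ← hG]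
    have hcast := congrArg (fun p : R[X] => (p : R⟦X⟧)) hcross
    push_cast at hcast
    linear_combination -hcast
  have := congrArg (PowerSeries.coeff (n + 1)) key
  rw [map_sub, hnext] at this
  rw [hG]
  simpa [PowerSeries.coeff_X_pow_mul', coeff_contDen_zero] using this

theorem coeff_mul_contDen_of_lt (hF : IsContFracExpansion a F) {j k : ℕ}
    (hjk : j < k) : PowerSeries.coeff (j + k) (F * (contDen a (2 * k - 1) : R⟦X⟧)) = 0 := by
  have hnum : (contNum a (2 * k - 1)).coeff (j + k) = 0 :=
    coeff_eq_zero_of_natDegree_lt ((natDegree_contNum_le _).trans_lt (by omega))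
  rw [← sub_add_cancel (F * _) (contNum a (2 * k - 1) : R⟦X⟧), map_add,
    hF.coeff_sub_eq_zero (by omega), Polynomial.coeff_coe, hnum, add_zero]

/-- Only `a 2, a 3, …` enter the recurrences; normalising `a 0 = 1`, `a 1 = -1` turns the pivots
`-(a 2 ⋯ a (2k))` into prefix products, and also covers `k = 0`, where `2 * k - 1` truncates to `0`
and the pivot is `coeff 0 F = 1`. -/
theorem coeff_mul_contDen_self (hF : IsContFracExpansion a F)
    (h0 : a 0 = 1) (h1 : a 1 = -1) (k : ℕ) :
    PowerSeries.coeff (k + k) (F * (contDen a (2 * k - 1) : R⟦X⟧)) =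
      ∏ j ∈ range (2 * k + 1), a j := by
  rcases k with _ | k
  · simp [contDen, hF.coeff_zero, h0]
  have hnum : (contNum a (2 * k + 1)).coeff (2 * k + 2) = 0 :=
    coeff_eq_zero_of_natDegree_lt ((natDegree_contNum_le _).trans_lt (by omega))
  rw [show k + 1 + (k + 1) = 2 * k + 1 + 1 by ring, show 2 * (k + 1) - 1 = 2 * k + 1 by omega,
    ← sub_add_cancel (F * _) (contNum a (2 * k + 1) : R⟦X⟧), map_add, hF.coeff_succ_sub,
    Polynomial.coeff_coe, hnum, add_zero,
    ← prod_range_mul_prod_Ico _ (by omega : 2 ≤ 2 * (k + 1) + 1)]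
  simp [prod_range_succ, h0, h1, pow_succ, pow_mul, show 2 * (k + 1) + 1 = 2 * k + 1 + 2 by ring]

end IsContFracExpansion

end ContFracExpansion

section HankelDet

variable {R : Type*} [CommRing R]

theorem PowerSeries.coeff_add_mul_polynomial (F : R⟦X⟧) {q : R[X]} {L : ℕ} (hq : q.natDegree ≤ L)
    (r : ℕ) :
    coeff (r + L) (F * (q : R⟦X⟧)) = ∑ i ∈ range (L + 1), q.coeff (L - i) * coeff (r + i) F := by
  rw [coeff_mul, Nat.sum_antidiagonal_eq_sum_range_succ (fun p s => coeff p F * coeff s (q : R⟦X⟧)),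
    show (r + L).succ = r + (L + 1) by omega, sum_range_add,
    add_eq_right.mpr (sum_eq_zero fun p hp => ?_)]
  · refine sum_congr rfl fun i _ => ?_
    rw [Nat.add_sub_add_left, Polynomial.coeff_coe, mul_comm]
  · rw [Polynomial.coeff_coe, coeff_eq_zero_of_natDegree_lt (by simp at hp; omega), mul_zero]

noncomputable def hankel (F : R⟦X⟧) (m : ℕ) : Matrix (Fin m) (Fin m) R :=
  Matrix.of fun i j => PowerSeries.coeff ((i : ℕ) + (j : ℕ)) F

noncomputable def contDenMatrix (a : ℕ → R) (m : ℕ) : Matrix (Fin m) (Fin m) R :=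
  Matrix.of fun k i => if i ≤ k then (contDen a (2 * k - 1)).coeff (k - i) else 0

theorem det_contDenMatrix (a : ℕ → R) (m : ℕ) : (contDenMatrix a m).det = 1 := by
  rw [Matrix.det_of_isLowerTriangular (contDenMatrix a m) fun k i hik => if_neg (not_le.mpr hik)]
  simp [contDenMatrix, coeff_contDen_zero]

theorem contDenMatrix_mul_hankel_apply (a : ℕ → R) (F : R⟦X⟧) {m : ℕ} (k j : Fin m) :
    (contDenMatrix a m * hankel F m) k j =
      PowerSeries.coeff (j + k) (F * (contDen a (2 * k - 1) : R⟦X⟧)) := by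
  rw [PowerSeries.coeff_add_mul_polynomial F (L := k) ((natDegree_contDen_le _).trans (by omega)),
    Matrix.mul_apply]
  simp only [contDenMatrix, hankel, Matrix.of_apply, ite_mul, zero_mul, Fin.le_iff_val_le_val]
  rw [Fin.sum_univ_eq_sum_range (fun i => if i ≤ (k : ℕ) then
      (contDen a (2 * k - 1)).coeff (k - i) * PowerSeries.coeff (i + j) F else 0) m, ← sum_filter,
    show (range m).filter (· ≤ (k : ℕ)) = range (k + 1) by ext; simp; omega]
  simp only [add_comm]

theorem IsContFracExpansion.det_hankel {a : ℕ → R} {F : R⟦X⟧} (hF : IsContFracExpansion a F)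
    (h0 : a 0 = 1) (h1 : a 1 = -1) (m : ℕ) :
    (hankel F m).det = ∏ k ∈ range m, ∏ j ∈ range (2 * k + 1), a j := by
  have htri : (contDenMatrix a m * hankel F m).IsUpperTriangular := fun k j hjk => by
    rw [contDenMatrix_mul_hankel_apply]
    exact hF.coeff_mul_contDen_of_lt hjk
  calc (hankel F m).det = (contDenMatrix a m * hankel F m).det := by
        rw [Matrix.det_mul, det_contDenMatrix, one_mul]
    _ = ∏ k : Fin m, ∏ j ∈ range (2 * (k : ℕ) + 1), a j := by
        rw [Matrix.det_of_isUpperTriangular htri]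
        simp only [contDenMatrix_mul_hankel_apply, hF.coeff_mul_contDen_self h0 h1]
    _ = _ := Fin.prod_univ_eq_prod_range (fun k => ∏ j ∈ range (2 * k + 1), a j) m

end HankelDet

section TwoKernel

variable {α : Type*}

def twoKernel (f : ℕ → α) : Set (ℕ → α) :=
  {g | ∃ d j : ℕ, j < 2 ^ d ∧ g = fun n => f (2 ^ d * n + j)}

theorem self_mem_twoKernel (f : ℕ → α) : f ∈ twoKernel f :=
  ⟨0, 0, by simp, by simp⟩

theorem decimate_mem_twoKernel {f g : ℕ → α} (hg : g ∈ twoKernel f) {b : ℕ} (hb : b < 2) :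
    (fun n => g (2 * n + b)) ∈ twoKernel f := by
  obtain ⟨d, j, hj, rfl⟩ := hg
  refine ⟨d + 1, 2 ^ d * b + j, ?_, funext fun n => ?_⟩
  · rw [pow_succ]; nlinarith
  · simp only; ring_nf

theorem twoKernel_subset_of_closed {f : ℕ → α} {S : Set (ℕ → α)} (hf : f ∈ S)
    (hS : ∀ g ∈ S, (fun n => g (2 * n)) ∈ S ∧ (fun n => g (2 * n + 1)) ∈ S) :
    twoKernel f ⊆ S := by
  suffices ∀ d j, j < 2 ^ d → (fun n => f (2 ^ d * n + j)) ∈ S by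
    rintro g ⟨d, j, hj, rfl⟩
    exact this d j hj
  intro d
  induction d with
  | zero =>
    intro j hj
    obtain rfl : j = 0 := by omega
    simpa using hf
  | succ d ih =>
    intro j hj
    have hsplit : (fun n => f (2 ^ (d + 1) * n + j)) =
        fun n => f (2 ^ d * (2 * n + j / 2 ^ d) + j % 2 ^ d) := by
      funext n
      rw [pow_succ]
      nth_rewrite 1 [← Nat.div_add_mod j (2 ^ d)]
      ring_nf
    have hq : j / 2 ^ d < 2 := Nat.div_lt_of_lt_mul (by rwa [pow_succ] at hj)
    have hg := hS _ (ih (j % 2 ^ d) (Nat.mod_lt _ (by positivity)))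
    rw [hsplit]
    interval_cases j / 2 ^ d
    · simpa using hg.1
    · exact hg.2

theorem twoKernel_subset_insert (f : ℕ → α) :
    twoKernel f ⊆
      insert f (twoKernel (fun n => f (2 * n)) ∪ twoKernel (fun n => f (2 * n + 1))) := by
  refine twoKernel_subset_of_closed (Set.mem_insert f _) ?_
  rintro g (rfl | hg | hg)
  · exact ⟨.inr (.inl (self_mem_twoKernel _)), .inr (.inr (self_mem_twoKernel _))⟩
  · exact ⟨.inr (.inl (by simpa using decimate_mem_twoKernel hg zero_lt_two)),
      .inr (.inl (decimate_mem_twoKernel hg one_lt_two))⟩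
  · exact ⟨.inr (.inr (by simpa using decimate_mem_twoKernel hg zero_lt_two)),
      .inr (.inr (decimate_mem_twoKernel hg one_lt_two))⟩

theorem twoKernel_finite_of_decimations {f : ℕ → α} (h0 : (twoKernel fun n => f (2 * n)).Finite)
    (h1 : (twoKernel fun n => f (2 * n + 1)).Finite) : (twoKernel f).Finite :=
  ((h0.union h1).insert f).subset (twoKernel_subset_insert f)

theorem twoKernel_const_finite (c : α) : (twoKernel fun _ : ℕ => c).Finite :=
  (Set.finite_singleton _).subset (twoKernel_subset_of_closed rfl fun _ hg => by subst hg; simp)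

theorem twoKernel_finite_of_self_similar {M : Type*} [CommMonoid M] [Finite Mˣ] {g : ℕ → M}
    (a b c d : Mˣ) (h0 : ∀ n, g (2 * n) = ↑(a * b ^ n) * g n)
    (h1 : ∀ n, g (2 * n + 1) = ↑(c * d ^ n) * g n) : (twoKernel g).Finite := by
  refine (Set.finite_range fun p : Mˣ × Mˣ => fun n => ↑(p.1 * p.2 ^ n) * g n).subset
    (twoKernel_subset_of_closed ⟨(1, 1), by simp⟩ ?_)
  rintro _ ⟨⟨ε, σ⟩, rfl⟩
  refine ⟨⟨(ε * a, σ ^ 2 * b), funext fun n => ?_⟩, ⟨(ε * σ * c, σ ^ 2 * d), funext fun n => ?_⟩⟩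
  · simp only [h0, ← mul_assoc, ← Units.val_mul]
    congr 2
    rw [mul_pow, ← pow_mul, pow_mul']
    ac_rfl
  · simp only [h1, ← mul_assoc, ← Units.val_mul]
    congr 2
    rw [mul_pow, ← pow_mul, pow_succ, pow_mul']
    ac_rfl

end TwoKernel

theorem Finset.prod_range_two_mul {M : Type*} [CommMonoid M] (f : ℕ → M) (n : ℕ) :
    ∏ j ∈ range (2 * n), f j = ∏ i ∈ range n, f (2 * i) * f (2 * i + 1) := by
  induction n with
  | zero => simp
  | succ n ih =>
    rw [show 2 * (n + 1) = 2 * n + 1 + 1 by ring, prod_range_succ, prod_range_succ, ih,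
      prod_range_succ, mul_assoc]

section ThueMorse

theorem tmSeq_zero : tmSeq 0 = 1 := by
  rw [tmSeq]

theorem tmSeq_two_mul (n : ℕ) : tmSeq (2 * n) = tmSeq n := by
  rcases n with _ | n
  · rfl
  rw [show 2 * (n + 1) = 2 * n + 1 + 1 by ring, tmSeq]
  simp [show (2 * n + 1 + 1) % 2 = 0 by omega, show (2 * n + 1 + 1) / 2 = n + 1 by omega]

theorem tmSeq_two_mul_add_one (n : ℕ) : tmSeq (2 * n + 1) = -tmSeq n := by
  rw [tmSeq]
  simp [show (2 * n + 1) / 2 = n by omega]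

theorem tmSeq_one : tmSeq 1 = -1 := by
  simpa [tmSeq_zero] using tmSeq_two_mul_add_one 0

theorem isUnit_tmSeq (n : ℕ) : IsUnit (tmSeq n) := by
  induction n using Nat.strong_induction_on with
  | _ n ih =>
    rcases Nat.even_or_odd' n with ⟨k, rfl | rfl⟩
    · rcases k with _ | k
      · simp [tmSeq_zero]
      · rw [tmSeq_two_mul]; exact ih _ (by omega)
    · rw [tmSeq_two_mul_add_one]; exact (ih k (by omega)).neg

theorem Ptm_eq_contNum : Ptm = contNum tmSeq :=
  eq_of_recurrence rfl rfl (fun _ => rfl) (fun _ => rfl)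

theorem Qtm_eq_contDen : Qtm = contDen tmSeq :=
  eq_of_recurrence rfl rfl (fun _ => rfl) (fun _ => rfl)

theorem prod_range_tmSeq_two_mul_add_one (k : ℕ) :
    ∏ j ∈ range (2 * k + 1), tmSeq j = (-1) ^ k * tmSeq k := by
  simp [prod_range_succ, prod_range_two_mul, tmSeq_two_mul, tmSeq_two_mul_add_one,
    Int.isUnit_mul_self (isUnit_tmSeq _)]

variable {F : ℤ⟦X⟧}

theorem IsContFracExpansion.det_hankel_tm_two_mul (hF : IsContFracExpansion tmSeq F) (n : ℕ) :
    (hankel F (2 * n)).det = 1 := by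
  rw [hF.det_hankel tmSeq_zero tmSeq_one, prod_range_two_mul]
  refine prod_eq_one fun i _ => ?_
  simp [prod_range_tmSeq_two_mul_add_one, tmSeq_two_mul, tmSeq_two_mul_add_one, pow_succ, pow_mul,
    Int.isUnit_mul_self (isUnit_tmSeq _)]

theorem IsContFracExpansion.det_hankel_tm_two_mul_add_one (hF : IsContFracExpansion tmSeq F)
    (n : ℕ) : (hankel F (2 * n + 1)).det = tmSeq n := by
  rw [hF.det_hankel tmSeq_zero tmSeq_one, prod_range_succ, ← hF.det_hankel tmSeq_zero tmSeq_one,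
    hF.det_hankel_tm_two_mul, prod_range_tmSeq_two_mul_add_one, tmSeq_two_mul, pow_mul]
  simp

theorem twoKernel_tmSeq_finite : (twoKernel tmSeq).Finite :=
  twoKernel_finite_of_self_similar 1 1 (-1) 1 (by simp [tmSeq_two_mul])
    (by simp [tmSeq_two_mul_add_one])

end ThueMorse

section PeriodDoubling

theorem pdSeq_two_mul (n : ℕ) : pdSeq (2 * n) = 1 := by
  rcases n with _ | n
  · rw [pdSeq]
  rw [show 2 * (n + 1) = 2 * n + 1 + 1 by ring, pdSeq]
  simp [show (2 * n + 1 + 1) % 2 = 0 by omega]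

theorem pdSeq_two_mul_add_one (n : ℕ) : pdSeq (2 * n + 1) = -pdSeq n := by
  rw [pdSeq]
  simp [show (2 * n + 1) / 2 = n by omega]

theorem pdSeq_zero : pdSeq 0 = 1 := pdSeq_two_mul 0

theorem pdSeq_one : pdSeq 1 = -1 := by
  simpa [pdSeq_zero] using pdSeq_two_mul_add_one 0

theorem isUnit_pdSeq (n : ℕ) : IsUnit (pdSeq n) := by
  induction n using Nat.strong_induction_on with
  | _ n ih =>
    rcases Nat.even_or_odd' n with ⟨k, rfl | rfl⟩
    · simp [pdSeq_two_mul]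
    · rw [pdSeq_two_mul_add_one]; exact (ih k (by omega)).neg

theorem Ppd_eq_contNum : Ppd = contNum pdSeq :=
  eq_of_recurrence rfl rfl (fun _ => rfl) (fun _ => rfl)

theorem Qpd_eq_contDen : Qpd = contDen pdSeq :=
  eq_of_recurrence rfl rfl (fun _ => rfl) (fun _ => rfl)

theorem prod_range_pdSeq_two_mul (n : ℕ) :
    ∏ j ∈ range (2 * n), pdSeq j = (-1) ^ n * ∏ j ∈ range n, pdSeq j := by
  simp [prod_range_two_mul, pdSeq_two_mul, pdSeq_two_mul_add_one, prod_neg]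

theorem prod_range_pdSeq_two_mul_add_one (n : ℕ) :
    ∏ j ∈ range (2 * n + 1), pdSeq j = (-1) ^ n * ∏ j ∈ range n, pdSeq j := by
  rw [prod_range_succ, prod_range_pdSeq_two_mul, pdSeq_two_mul, mul_one]

variable {F : ℤ⟦X⟧}

theorem IsContFracExpansion.det_hankel_pd_two_mul (hF : IsContFracExpansion pdSeq F) (n : ℕ) :
    (hankel F (2 * n)).det = (-1) ^ n := by
  rw [hF.det_hankel pdSeq_zero pdSeq_one, prod_range_two_mul,
    show ((-1 : ℤ)) ^ n = ∏ _i ∈ range n, (-1) by simp]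
  refine prod_congr rfl fun i _ => ?_
  have hG : (∏ j ∈ range i, pdSeq j) * ∏ j ∈ range i, pdSeq j = 1 :=
    Int.isUnit_mul_self (IsUnit.prod_iff.mpr fun j _ => isUnit_pdSeq j)
  have hsign : (-1 : ℤ) ^ i * (-1) ^ i = 1 := Int.isUnit_mul_self (isUnit_neg_one.pow i)
  rw [prod_range_pdSeq_two_mul_add_one, prod_range_pdSeq_two_mul_add_one, prod_range_pdSeq_two_mul,
    prod_range_pdSeq_two_mul_add_one, pow_succ, pow_mul, neg_one_sq, one_pow]
  linear_combination -((-1 : ℤ) ^ i) ^ 2 * hG - hsign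

theorem IsContFracExpansion.det_hankel_pd_two_mul_add_one (hF : IsContFracExpansion pdSeq F)
    (n : ℕ) : (hankel F (2 * n + 1)).det = ∏ j ∈ range n, pdSeq j := by
  have hsign : (-1 : ℤ) ^ n * (-1) ^ n = 1 := Int.isUnit_mul_self (isUnit_neg_one.pow n)
  rw [hF.det_hankel pdSeq_zero pdSeq_one, prod_range_succ, ← hF.det_hankel pdSeq_zero pdSeq_one,
    hF.det_hankel_pd_two_mul, prod_range_pdSeq_two_mul_add_one, prod_range_pdSeq_two_mul, pow_mul,
    neg_one_sq, one_pow, one_mul, ← mul_assoc, hsign, one_mul]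

theorem twoKernel_neg_one_pow_finite : (twoKernel fun n => (-1 : ℤ) ^ n).Finite :=
  twoKernel_finite_of_self_similar 1 (-1) (-1) (-1) (fun n => by simp [pow_mul, ← mul_pow])
    (fun n => by simp [pow_succ, pow_mul, ← mul_pow])

theorem twoKernel_prod_range_pdSeq_finite : (twoKernel fun n => ∏ j ∈ range n, pdSeq j).Finite :=
  twoKernel_finite_of_self_similar 1 (-1) 1 (-1) (by simp [prod_range_pdSeq_two_mul])
    (by simp [prod_range_pdSeq_two_mul_add_one])

end PeriodDoubling

/-- The sequences of Hankel determinants of C(x) and D(x) have finite 2-kernels;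
in particular they are 2-automatic. (For n = 0 the determinant of the empty 0×0
matrix is 1, so H(0) = H'(0) = 1.) -/
theorem tm_pd_cf_hankel_two_automatic (Cx Dx : PowerSeries ℤ)
    (hC : ∀ n : ℕ, (PowerSeries.X : PowerSeries ℤ) ^ (n + 1) ∣
      Cx * (Qtm n : PowerSeries ℤ) - (Ptm n : PowerSeries ℤ))
    (hD : ∀ n : ℕ, (PowerSeries.X : PowerSeries ℤ) ^ (n + 1) ∣
      Dx * (Qpd n : PowerSeries ℤ) - (Ppd n : PowerSeries ℤ))
    (H H' : ℕ → ℤ)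
    (hH : ∀ n : ℕ, H n = (Matrix.of fun i j : Fin n =>
      PowerSeries.coeff ((i : ℕ) + (j : ℕ)) Cx).det)
    (hH' : ∀ n : ℕ, H' n = (Matrix.of fun i j : Fin n =>
      PowerSeries.coeff ((i : ℕ) + (j : ℕ)) Dx).det) :
    {g : ℕ → ℤ | ∃ d j : ℕ, j < 2 ^ d ∧ g = fun n => H (2 ^ d * n + j)}.Finite ∧
    {g : ℕ → ℤ | ∃ d j : ℕ, j < 2 ^ d ∧ g = fun n => H' (2 ^ d * n + j)}.Finite := by
  have hCx : IsContFracExpansion tmSeq Cx := by rwa [Ptm_eq_contNum, Qtm_eq_contDen] at hC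
  have hDx : IsContFracExpansion pdSeq Dx := by rwa [Ppd_eq_contNum, Qpd_eq_contDen] at hD
  have hHeven : (fun n => H (2 * n)) = fun _ => 1 :=
    funext fun n => (hH _).trans (hCx.det_hankel_tm_two_mul n)
  have hHodd : (fun n => H (2 * n + 1)) = tmSeq :=
    funext fun n => (hH _).trans (hCx.det_hankel_tm_two_mul_add_one n)
  have hH'even : (fun n => H' (2 * n)) = fun n => (-1) ^ n :=
    funext fun n => (hH' _).trans (hDx.det_hankel_pd_two_mul n)
  have hH'odd : (fun n => H' (2 * n + 1)) = fun n => ∏ j ∈ range n, pdSeq j :=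
    funext fun n => (hH' _).trans (hDx.det_hankel_pd_two_mul_add_one n)
  refine ⟨twoKernel_finite_of_decimations ?_ ?_, twoKernel_finite_of_decimations ?_ ?_⟩
  · rw [hHeven]; exact twoKernel_const_finite 1
  · rw [hHodd]; exact twoKernel_tmSeq_finite
  · rw [hH'even]; exact twoKernel_neg_one_pow_finite
  · rw [hH'odd]; exact twoKernel_prod_range_pdSeq_finite
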